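/- arXiv:1406.3773 — 2 statements merged into one kernel-verified Lean document; each statement's English description precedes it below -/
import Mathlib

section
/- Let K be a field of characteristic 0 and P(x) ∈ K[x] a monic palindromic polynomial of degree 2n with palindromic reduction Q(y) (the monic degree-n polynomial with P(x) = x^n Q(x + 1/x)). Then P is separable if and only if the discriminant Δ of Q is nonzero and Δ' := Q(2)·Q(−2) is nonzero. -/
/-!
Over the algebraic closure, `P` has the roots `x i, (x i)⁻¹` and `Q` the roots `y i = x i + (x i)⁻¹`.
Since `a + a⁻¹ = b + b⁻¹` iff `a = b` or `a = b⁻¹`, the roots of `P` are distinct exactly when the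
`y i` are distinct (`Δ ≠ 0`) and no `x i` is its own inverse, i.e. `x i ≠ ±1`, i.e. `y i ≠ ±2`
(`Δ' ≠ 0`).
-/

open Polynomial Function

section AddInv

variable {F : Type*} [Field F] {a b : F}

theorem add_inv_eq_add_inv_iff (ha : a ≠ 0) (hb : b ≠ 0) :
    a + a⁻¹ = b + b⁻¹ ↔ a = b ∨ a = b⁻¹ := by
  have key : a + a⁻¹ - (b + b⁻¹) = (a - b) * (1 - (a * b)⁻¹) := by
    field_simp
    ring
  rw [← sub_eq_zero, key, mul_eq_zero, sub_eq_zero, sub_eq_zero, eq_comm (a := (1 : F)),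
    inv_eq_one, mul_eq_one_iff_eq_inv₀ hb]

theorem add_inv_eq_two_iff (ha : a ≠ 0) : a + a⁻¹ = 2 ↔ a = 1 := by
  simpa [one_add_one_eq_two] using add_inv_eq_add_inv_iff ha one_ne_zero

theorem add_inv_eq_neg_two_iff (ha : a ≠ 0) : a + a⁻¹ = -2 ↔ a = -1 := by
  have h := add_inv_eq_add_inv_iff ha (neg_ne_zero.2 one_ne_zero)
  rwa [inv_neg, inv_one, or_self, ← neg_add, one_add_one_eq_two] at h

theorem eq_inv_iff_add_inv_eq_two_or_neg_two (ha : a ≠ 0) :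
    a = a⁻¹ ↔ a + a⁻¹ = 2 ∨ a + a⁻¹ = -2 := by
  rw [add_inv_eq_two_iff ha, add_inv_eq_neg_two_iff ha, eq_comm, inv_eq_self₀]
  tauto

end AddInv

theorem injective_sumElim_inv_iff {ι F : Type*} [Field F] {x : ι → F} (hx : ∀ i, x i ≠ 0) :
    Injective (Sum.elim x fun i => (x i)⁻¹) ↔
      Injective (fun i => x i + (x i)⁻¹) ∧ ∀ i, x i + (x i)⁻¹ ≠ 2 ∧ x i + (x i)⁻¹ ≠ -2 := by
  have hfixed (i) : x i ≠ (x i)⁻¹ ↔ x i + (x i)⁻¹ ≠ 2 ∧ x i + (x i)⁻¹ ≠ -2 := by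
    rw [Ne, eq_inv_iff_add_inv_eq_two_or_neg_two (hx i), not_or]
  simp_rw [Sum.elim_injective, ← hfixed]
  constructor
  · rintro ⟨hinj, -, hne⟩
    refine ⟨fun i j h => ?_, fun i => hne i i⟩
    rcases (add_inv_eq_add_inv_iff (hx i) (hx j)).1 h with h | h
    exacts [hinj h, absurd h (hne i j)]
  · rintro ⟨hinj, hne⟩
    have hsum {i j} (h : x i = x j ∨ x i = (x j)⁻¹) : i = j :=
      hinj ((add_inv_eq_add_inv_iff (hx i) (hx j)).2 h)
    refine ⟨fun i j h => hsum (.inl h), fun i j h => hsum (.inl (inv_inj.1 h)), fun i j h => ?_⟩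
    obtain rfl := hsum (.inr h)
    exact hne i h

theorem separable_prod_mul_X_sub_C_iff {ι F : Type*} [Field F] [Fintype ι] {a b : ι → F} :
    (∏ i, (X - C (a i)) * (X - C (b i))).Separable ↔ Injective (Sum.elim a b) := by
  rw [← separable_prod_X_sub_C_iff, Fintype.prod_sum_type, Finset.prod_mul_distrib]
  rfl

theorem eval_ne_zero_iff_of_map_eq_prod {ι K L : Type*} [Fintype ι] [Field K] [CommRing L]
    [IsDomain L] (f : K →+* L) {Q : K[X]} {y : ι → L} (hQ : Q.map f = ∏ i, (X - C (y i)))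
    (c : K) : Q.eval c ≠ 0 ↔ ∀ i, y i ≠ f c := by
  rw [← map_ne_zero f, ← eval_map_apply, hQ, eval_prod, Finset.prod_ne_zero_iff]
  simp only [Finset.mem_univ, forall_const, eval_sub, eval_X, eval_C, sub_ne_zero]
  exact forall_congr' fun _ => ne_comm

/-- The discriminant of a monic polynomial with roots `v i` is the square of the Vandermonde
determinant. -/
theorem prod_Ioi_sq_sub_ne_zero_iff {R : Type*} [CommRing R] [IsDomain R] {n : ℕ}
    (v : Fin n → R) :
    ∏ i, ∏ j ∈ Finset.Ioi i, (v i - v j) ^ 2 ≠ 0 ↔ Injective v := by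
  have h : ∏ i, ∏ j ∈ Finset.Ioi i, (v i - v j) ^ 2 = (Matrix.vandermonde v).det ^ 2 := by
    simp_rw [Matrix.det_vandermonde, ← Finset.prod_pow, sub_sq_comm]
  rw [h, pow_ne_zero_iff two_ne_zero, Matrix.det_vandermonde_ne_zero_iff]

theorem palindromic_separable_iff_general
    (K : Type*) [Field K] (n : ℕ)
    (P Q : Polynomial K)
    (x : Fin n → AlgebraicClosure K) (hx : ∀ i, x i ≠ 0)
    (hProots : P.map (algebraMap K (AlgebraicClosure K)) =
      ∏ i, ((X - C (x i)) * (X - C (x i)⁻¹)))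
    (hQroots : Q.map (algebraMap K (AlgebraicClosure K)) =
      ∏ i, (X - C (x i + (x i)⁻¹))) :
    P.Separable ↔
      ((∏ i, ∏ j ∈ Finset.Ioi i, ((x i + (x i)⁻¹) - (x j + (x j)⁻¹)) ^ 2) ≠ 0 ∧
        Q.eval 2 * Q.eval (-2) ≠ 0) := by
  rw [← separable_map (algebraMap K (AlgebraicClosure K)), hProots, separable_prod_mul_X_sub_C_iff,
    injective_sumElim_inv_iff hx, prod_Ioi_sq_sub_ne_zero_iff, mul_ne_zero_iff,
    eval_ne_zero_iff_of_map_eq_prod _ hQroots, eval_ne_zero_iff_of_map_eq_prod _ hQroots,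
    map_neg, map_ofNat, forall_and]

/-- A monic palindromic polynomial `P` of degree `2n`, with palindromic reduction `Q`,
is separable iff the discriminant `Δ = ∏_{i<j} (y_i - y_j)²` of `Q` is nonzero and
`Δ' = Q(2)·Q(-2)` is nonzero. -/
theorem palindromic_separable_iff
    (K : Type*) [Field K] [CharZero K] (n : ℕ)
    (P Q : Polynomial K) (hPmonic : P.Monic) (hPdeg : P.natDegree = 2 * n)
    (hconst : P.coeff 0 ≠ 0) (hpal : P.reverse = P)
    (hQmonic : Q.Monic) (hQdeg : Q.natDegree = n)
    (x : Fin n → AlgebraicClosure K) (hx : ∀ i, x i ≠ 0)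
    (hProots : P.map (algebraMap K (AlgebraicClosure K)) =
      ∏ i, ((X - C (x i)) * (X - C (x i)⁻¹)))
    (hQroots : Q.map (algebraMap K (AlgebraicClosure K)) =
      ∏ i, (X - C (x i + (x i)⁻¹))) :
    P.Separable ↔
      ((∏ i, ∏ j ∈ Finset.Ioi i, ((x i + (x i)⁻¹) - (x j + (x j)⁻¹)) ^ 2) ≠ 0 ∧
        Q.eval 2 * Q.eval (-2) ≠ 0) :=
  palindromic_separable_iff_general K n P Q x hx hProots hQroots
end

section
/- All twelve roots (in ℂ) of the palindromic polynomials P_2(x) and P_3(x), where R_ℓ(x) = P_ℓ(x)(x−1) with R_2(x) = x⁷ + (1/4)x⁶ − x⁵ − (13/16)x⁴ + (13/16)x³ + x² − (1/4)x − 1 and R_3(x) = x⁷ − (29/27)x⁶ + (175/243)x⁵ − (1099/729)x⁴ + (1099/729)x³ − (175/243)x² + (29/27)x − 1, lie on the unit circle. -/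
/-!
Cancelling `X - 1` shows that `P_ℓ` is a palindromic sextic, so for `z ≠ 0` we have
`P_ℓ(z) = z³ Q_ℓ(z + z⁻¹)` with `Q_ℓ` a real cubic. Sign changes of `Q_ℓ` at rational points of
`[-2, 2]` produce three real roots there, which are then all of its complex roots. Hence for a
root `z` of `P_ℓ`, `w = z + z⁻¹` is real with `|w| ≤ 2`, and `z² - w z + 1 = 0` forces `|z| = 1`.
-/

open Polynomial Set

theorem Complex.norm_eq_one_of_add_inv_eq_ofReal {z : ℂ} (hz : z ≠ 0) {y : ℝ} (hy : |y| ≤ 2)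
    (h : z + z⁻¹ = y) : ‖z‖ = 1 := by
  have hquad : z ^ 2 + 1 = y * z := by
    rw [← h]; field_simp
  have hre : z.re ^ 2 - z.im ^ 2 + 1 = y * z.re := by
    simpa [sq] using congrArg Complex.re hquad
  have him : 2 * z.re * z.im = y * z.im := by
    have := congrArg Complex.im hquad
    simp only [sq, Complex.add_im, Complex.mul_im, Complex.one_im, Complex.ofReal_re,
      Complex.ofReal_im] at this
    linarith
  have hy2 : y ^ 2 ≤ 4 := by nlinarith [abs_nonneg y, sq_abs y]
  have hnormSq : z.re ^ 2 + z.im ^ 2 = 1 := by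
    rcases eq_or_ne z.im 0 with him0 | him0
    · rw [him0] at hre ⊢
      nlinarith [sq_nonneg (2 * z.re - y), sq_nonneg (z.re ^ 2 - 1)]
    · have : y = 2 * z.re := (mul_right_cancel₀ him0 him).symm
      subst this
      linarith
  rw [← pow_eq_one_iff_of_nonneg (norm_nonneg z) two_ne_zero, Complex.sq_norm,
    Complex.normSq_apply, ← hnormSq]
  ring

theorem Polynomial.mem_of_isRoot_of_natDegree_le_card {R : Type*} [CommRing R] [IsDomain R]
    {p : R[X]} (hp : p ≠ 0) {s : Finset R} (hs : ∀ r ∈ s, p.IsRoot r)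
    (hdeg : p.natDegree ≤ s.card) {w : R} (hw : p.IsRoot w) : w ∈ s := by
  classical
  by_contra hws
  have hsub : (insert w s).val ⊆ p.roots := fun r hr => by
    rcases Finset.mem_insert.mp hr with rfl | hr
    · exact (mem_roots hp).mpr hw
    · exact (mem_roots hp).mpr (hs r hr)
  have := card_le_degree_of_subset_roots hsub
  rw [Finset.card_insert_of_notMem hws] at this
  omega

theorem Polynomial.exists_isRoot_mem_Ioo_of_eval_mul_eval_neg (q : ℝ[X]) {a b : ℝ} (hab : a ≤ b)
    (h : q.eval a * q.eval b < 0) : ∃ r ∈ Ioo a b, q.IsRoot r := by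
  have hcont : ContinuousOn (fun x => q.eval x) (Icc a b) := q.continuous.continuousOn
  rcases mul_neg_iff.mp h with ⟨ha, hb⟩ | ⟨ha, hb⟩
  · exact intermediate_value_Ioo' hab hcont ⟨hb, ha⟩
  · exact intermediate_value_Ioo hab hcont ⟨ha, hb⟩

theorem Polynomial.exists_eq_ofReal_of_isRoot_map_of_sign_changes (q : ℝ[X])
    (hdeg : q.natDegree ≤ 3) {t₀ t₁ t₂ t₃ : ℝ} (h₀₁ : t₀ ≤ t₁) (h₁₂ : t₁ ≤ t₂) (h₂₃ : t₂ ≤ t₃)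
    (hs₁ : q.eval t₀ * q.eval t₁ < 0) (hs₂ : q.eval t₁ * q.eval t₂ < 0)
    (hs₃ : q.eval t₂ * q.eval t₃ < 0) {w : ℂ} (hw : (q.map (algebraMap ℝ ℂ)).IsRoot w) :
    ∃ y ∈ Icc t₀ t₃, w = y := by
  obtain ⟨r₁, hr₁, hq₁⟩ := q.exists_isRoot_mem_Ioo_of_eval_mul_eval_neg h₀₁ hs₁
  obtain ⟨r₂, hr₂, hq₂⟩ := q.exists_isRoot_mem_Ioo_of_eval_mul_eval_neg h₁₂ hs₂
  obtain ⟨r₃, hr₃, hq₃⟩ := q.exists_isRoot_mem_Ioo_of_eval_mul_eval_neg h₂₃ hs₃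
  have hq : q ≠ 0 := by
    rintro rfl
    simp at hs₁
  set s : Finset ℂ := {(r₁ : ℂ), (r₂ : ℂ), (r₃ : ℂ)}
  have hroots : ∀ r ∈ s, (q.map (algebraMap ℝ ℂ)).IsRoot r := by
    simp only [s, Finset.mem_insert, Finset.mem_singleton]
    rintro r (rfl | rfl | rfl)
    exacts [hq₁.map, hq₂.map, hq₃.map]
  have hcard : s.card = 3 := by
    rw [Finset.card_eq_three]
    refine ⟨r₁, r₂, r₃, ?_, ?_, ?_, rfl⟩ <;> norm_cast <;>
      linarith [hr₁.2, hr₂.1, hr₂.2, hr₃.1]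
  have hmem := mem_of_isRoot_of_natDegree_le_card (Polynomial.map_ne_zero hq) hroots
    (by rw [natDegree_map, hcard]; exact hdeg) hw
  simp only [s, Finset.mem_insert, Finset.mem_singleton] at hmem
  rcases hmem with rfl | rfl | rfl
  · exact ⟨r₁, ⟨hr₁.1.le, by linarith [hr₁.2]⟩, rfl⟩
  · exact ⟨r₂, ⟨by linarith [hr₂.1], by linarith [hr₂.2]⟩, rfl⟩
  · exact ⟨r₃, ⟨by linarith [hr₃.1], hr₃.2.le⟩, rfl⟩

section Palindromic

variable {R : Type*} [CommRing R]

noncomputable def palindromicSextic (a b c : R) : R[X] :=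
  X ^ 6 + C a * X ^ 5 + C b * X ^ 4 + C c * X ^ 3 + C b * X ^ 2 + C a * X + 1

noncomputable def palindromicReduction (a b c : R) : R[X] :=
  X ^ 3 + C a * X ^ 2 + C (b - 3) * X + C (c - 2 * a)

theorem natDegree_palindromicReduction [Nontrivial R] (a b c : R) :
    (palindromicReduction a b c).natDegree = 3 := by
  unfold palindromicReduction
  compute_degree!

theorem map_palindromicSextic {S : Type*} [CommRing S] (f : R →+* S) (a b c : R) :
    (palindromicSextic a b c).map f = palindromicSextic (f a) (f b) (f c) := by
  simp [palindromicSextic]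

theorem map_palindromicReduction {S : Type*} [CommRing S] (f : R →+* S) (a b c : R) :
    (palindromicReduction a b c).map f = palindromicReduction (f a) (f b) (f c) := by
  simp [palindromicReduction, map_ofNat]

theorem eval_palindromicSextic {K : Type*} [Field K] (a b c : K) {z : K} (hz : z ≠ 0) :
    (palindromicSextic a b c).eval z = z ^ 3 * (palindromicReduction a b c).eval (z + z⁻¹) := by
  simp only [palindromicSextic, palindromicReduction, eval_add, eval_mul, eval_pow, eval_C,
    eval_X, eval_one]
  field_simp
  ring

end Palindromic

theorem norm_eq_one_of_mem_roots_palindromicSextic (a b c : ℝ) {t₀ t₁ t₂ t₃ : ℝ}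
    (ht₀ : -2 ≤ t₀) (h₀₁ : t₀ ≤ t₁) (h₁₂ : t₁ ≤ t₂) (h₂₃ : t₂ ≤ t₃) (ht₃ : t₃ ≤ 2)
    (hs₁ : (palindromicReduction a b c).eval t₀ * (palindromicReduction a b c).eval t₁ < 0)
    (hs₂ : (palindromicReduction a b c).eval t₁ * (palindromicReduction a b c).eval t₂ < 0)
    (hs₃ : (palindromicReduction a b c).eval t₂ * (palindromicReduction a b c).eval t₃ < 0)
    {z : ℂ} (hz : z ∈ ((palindromicSextic a b c).map (algebraMap ℝ ℂ)).roots) : ‖z‖ = 1 := by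
  rw [map_palindromicSextic, mem_roots', IsRoot.def] at hz
  obtain ⟨-, hroot⟩ := hz
  have hz0 : z ≠ 0 := by
    rintro rfl
    simp [palindromicSextic] at hroot
  rw [eval_palindromicSextic _ _ _ hz0, ← map_palindromicReduction] at hroot
  obtain ⟨y, hy, hw⟩ := exists_eq_ofReal_of_isRoot_map_of_sign_changes _
    (natDegree_palindromicReduction a b c).le h₀₁ h₁₂ h₂₃ hs₁ hs₂ hs₃
    ((mul_eq_zero.mp hroot).resolve_left (pow_ne_zero 3 hz0))
  exact Complex.norm_eq_one_of_add_inv_eq_ofReal hz0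
    (abs_le.mpr ⟨by linarith [hy.1], by linarith [hy.2]⟩) hw

/-- All roots of the palindromic factors `P₂`, `P₃` of the Satake characteristic
polynomials `R₂`, `R₃` lie on the unit circle. -/
theorem satake_roots_on_unit_circle
    (P₂ P₃ : Polynomial ℂ)
    (h₂ : P₂ * (X - 1) =
      X ^ 7 + C (1/4 : ℂ) * X ^ 6 - X ^ 5 - C (13/16 : ℂ) * X ^ 4
        + C (13/16 : ℂ) * X ^ 3 + X ^ 2 - C (1/4 : ℂ) * X - 1)
    (h₃ : P₃ * (X - 1) =
      X ^ 7 - C (29/27 : ℂ) * X ^ 6 + C (175/243 : ℂ) * X ^ 5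
        - C (1099/729 : ℂ) * X ^ 4 + C (1099/729 : ℂ) * X ^ 3
        - C (175/243 : ℂ) * X ^ 2 + C (29/27 : ℂ) * X - 1) :
    (∀ z ∈ P₂.roots, ‖z‖ = 1) ∧ (∀ z ∈ P₃.roots, ‖z‖ = 1) := by
  have hX : (X - 1 : ℂ[X]) ≠ 0 := by simpa using X_sub_C_ne_zero (1 : ℂ)
  have hP₂ : P₂ = (palindromicSextic (5/4 : ℝ) (1/4) (-9/16)).map (algebraMap ℝ ℂ) :=
    mul_right_cancel₀ hX <| h₂.trans <| Polynomial.funext fun z => by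
      rw [map_palindromicSextic]
      simp only [palindromicSextic, eval_add, eval_sub, eval_mul,
        eval_pow, eval_C, eval_X, eval_one]
      push_cast
      ring
  have hP₃ : P₃ = (palindromicSextic (-2/27 : ℝ) (157/243) (-628/729)).map (algebraMap ℝ ℂ) :=
    mul_right_cancel₀ hX <| h₃.trans <| Polynomial.funext fun z => by
      rw [map_palindromicSextic]
      simp only [palindromicSextic, eval_add, eval_sub, eval_mul,
        eval_pow, eval_C, eval_X, eval_one]
      push_cast
      ring
  subst hP₂ hP₃
  refine ⟨fun z hz => ?_, fun z hz => ?_⟩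
  · refine norm_eq_one_of_mem_roots_palindromicSextic _ _ _ (t₀ := -2) (t₁ := -3/2) (t₂ := -1)
      (t₃ := 2) ?_ ?_ ?_ ?_ ?_ ?_ ?_ ?_ hz <;> norm_num [palindromicReduction]
  · refine norm_eq_one_of_mem_roots_palindromicSextic _ _ _ (t₀ := -2) (t₁ := -1) (t₂ := 0)
      (t₃ := 2) ?_ ?_ ?_ ?_ ?_ ?_ ?_ ?_ hz <;> norm_num [palindromicReduction]
end
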